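/- arXiv:1802.07987 — 8 statements merged into one kernel-verified Lean document; each statement's English description precedes it below -/
import Mathlib

section
/- Let λ ∈ ℝ, v₃ > 0, θ₀ ∈ ℝ. If (y, z, θ) solves y' = cos θ, z' = sin θ, θ' = 2λ + v₃ cos θ with (y, z, θ)(0) = (0, 0, θ₀), and (ỹ, z̃, θ̃) solves the same system with λ replaced by −λ and initial conditions (0, 0, π − θ₀), then y(s) = −ỹ(s), z(s) = z̃(s), and θ(s) = π − θ̃(s) for all s ∈ ℝ. -/
/-!
Since `cos (π - x) = -cos x`, the function `π - θ̃` solves `θ' = 2λ + v₃ cos θ`, the same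
autonomous equation as `θ`, with the same initial value `θ₀`. The right-hand side is Lipschitz,
so `θ = π - θ̃`. Then `y' = cos θ = -cos θ̃ = (-ỹ)'` and `z' = sin θ = sin θ̃ = z̃'`, and the
initial values agree.
-/

open Real Set

lemma lipschitzWith_const_add_mul_cos (a b : ℝ) :
    LipschitzWith ‖b‖₊ fun x => a + b * cos x := by
  simpa using (LipschitzWith.const a).add ((lipschitzWith_smul b).comp lipschitzWith_cos)

lemma hasDerivAt_pi_sub_of_neg_add_mul_cos {θ : ℝ → ℝ} {a b s : ℝ}
    (h : HasDerivAt θ (-a + b * cos (θ s)) s) :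
    HasDerivAt (fun t => π - θ t) (a + b * cos (π - θ s)) s :=
  (h.const_sub π).congr_deriv (by rw [cos_pi_sub]; ring)

lemma eq_of_hasDerivAt_eq {E : Type*} [NormedAddCommGroup E] [NormedSpace ℝ E]
    {f g f' : ℝ → E} (hf : ∀ s, HasDerivAt f (f' s) s) (hg : ∀ s, HasDerivAt g (f' s) s)
    (s₀ : ℝ) (h₀ : f s₀ = g s₀) : f = g :=
  eq_of_fderiv_eq (fun s => (hf s).differentiableAt) (fun s => (hg s).differentiableAt)
    (fun s => by rw [(hf s).hasFDerivAt.fderiv, (hg s).hasFDerivAt.fderiv]) s₀ h₀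

theorem stmt5_general (lam v₃ θ₀ : ℝ)
    (y z θ yt zt θt : ℝ → ℝ)
    (hy : ∀ s, HasDerivAt y (Real.cos (θ s)) s)
    (hz : ∀ s, HasDerivAt z (Real.sin (θ s)) s)
    (hθ : ∀ s, HasDerivAt θ (2*lam + v₃ * Real.cos (θ s)) s)
    (hy0 : y 0 = 0) (hz0 : z 0 = 0) (hθ0 : θ 0 = θ₀)
    (hyt : ∀ s, HasDerivAt yt (Real.cos (θt s)) s)
    (hzt : ∀ s, HasDerivAt zt (Real.sin (θt s)) s)
    (hθt : ∀ s, HasDerivAt θt (2*(-lam) + v₃ * Real.cos (θt s)) s)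
    (hyt0 : yt 0 = 0) (hzt0 : zt 0 = 0) (hθt0 : θt 0 = Real.pi - θ₀) :
    ∀ s, y s = -(yt s) ∧ z s = zt s ∧ θ s = Real.pi - θt s := by
  have hθ_eq : θ = fun t => π - θt t :=
    ODE_solution_unique_univ (v := fun _ x => 2 * lam + v₃ * cos x) (s := fun _ => univ)
      (fun _ => (lipschitzWith_const_add_mul_cos _ _).lipschitzOnWith)
      (fun t => ⟨hθ t, mem_univ _⟩)
      (fun t => ⟨hasDerivAt_pi_sub_of_neg_add_mul_cos (by simpa only [mul_neg] using hθt t),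
        mem_univ _⟩)
      (by rw [hθ0, hθt0]; ring : θ 0 = π - θt 0)
  subst hθ_eq
  simp only [cos_pi_sub, sin_pi_sub] at hy hz
  have hy_eq : y = fun t => -yt t :=
    eq_of_hasDerivAt_eq hy (fun t => (hyt t).neg) 0 (by simp [hy0, hyt0])
  have hz_eq : z = zt := eq_of_hasDerivAt_eq hz hzt 0 (by rw [hz0, hzt0])
  exact fun s => ⟨congrFun hy_eq s, congrFun hz_eq s, rfl⟩

/-- If `(y, z, θ)` solves the generating-curve system for `λ` with initial data
`(0, 0, θ₀)` and `(ỹ, z̃, θ̃)` solves the system for `-λ` with initial data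
`(0, 0, π - θ₀)`, then `y = -ỹ`, `z = z̃` and `θ = π - θ̃` on all of `ℝ`. -/
theorem stmt5 (lam v₃ θ₀ : ℝ) (hv : 0 < v₃)
    (y z θ yt zt θt : ℝ → ℝ)
    (hy : ∀ s, HasDerivAt y (Real.cos (θ s)) s)
    (hz : ∀ s, HasDerivAt z (Real.sin (θ s)) s)
    (hθ : ∀ s, HasDerivAt θ (2*lam + v₃ * Real.cos (θ s)) s)
    (hy0 : y 0 = 0) (hz0 : z 0 = 0) (hθ0 : θ 0 = θ₀)
    (hyt : ∀ s, HasDerivAt yt (Real.cos (θt s)) s)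
    (hzt : ∀ s, HasDerivAt zt (Real.sin (θt s)) s)
    (hθt : ∀ s, HasDerivAt θt (2*(-lam) + v₃ * Real.cos (θt s)) s)
    (hyt0 : yt 0 = 0) (hzt0 : zt 0 = 0) (hθt0 : θt 0 = Real.pi - θ₀) :
    ∀ s, y s = -(yt s) ∧ z s = zt s ∧ θ s = Real.pi - θt s :=
  stmt5_general lam v₃ θ₀ y z θ yt zt θt hy hz hθ hy0 hz0 hθ0 hyt hzt hθt hyt0 hzt0 hθt0
end

section
/- Let v₃ > 0, λ = v₃/2, and let (y, z, θ) solve y' = cos θ, z' = sin θ, θ' = v₃(1 + cos θ) with θ(0) = 0 and θ not constant. Then −π < θ(s) < π for all s, θ is strictly increasing, lim_{s→±∞} θ(s) = ±π, and for s > 0 one has y(s) = θ(s)/v₃ − s; in particular lim_{s→+∞} y(s) = −∞ and lim_{s→−∞} y(s) = +∞. -/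
/-!
The function `s ↦ 2 arctan (v₃ s)` solves `θ' = v₃ (1 + cos θ)` with `θ 0 = 0`, since
`1 + cos (2 arctan x) = 2 / (1 + x²)`; the right-hand side is Lipschitz, so by uniqueness this
is `θ`. Every claim about `θ` is then a property of `arctan`. For `y`, note that
`y' = cos θ = θ' / v₃ - 1`, so `y - θ / v₃ + id` is constant, while `θ / v₃` converges at `±∞`.
-/

open Filter Topology Real

lemma lipschitzWith_const_mul_one_add_cos (c : ℝ) :
    LipschitzWith ‖c‖₊ fun x => c * (1 + cos x) :=
  LipschitzWith.of_dist_le_mul fun x y => by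
    rw [Real.dist_eq, Real.dist_eq, coe_nnnorm, Real.norm_eq_abs, ← mul_sub,
      add_sub_add_left_eq_sub, abs_mul]
    exact mul_le_mul_of_nonneg_left (abs_cos_sub_cos_le x y) (abs_nonneg c)

lemma hasDerivAt_two_mul_arctan_const_mul (c s : ℝ) :
    HasDerivAt (fun s => 2 * arctan (c * s)) (c * (1 + cos (2 * arctan (c * s)))) s := by
  have h := ((hasDerivAt_arctan (c * s)).comp s ((hasDerivAt_id s).const_mul c)).const_mul 2
  refine h.congr_deriv ?_
  have hpos : 0 < 1 + (c * s) ^ 2 := by positivity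
  rw [cos_two_mul, cos_sq_arctan]
  field_simp
  ring

lemma eq_two_mul_arctan_of_hasDerivAt {c : ℝ} {θ : ℝ → ℝ}
    (hθ : ∀ s, HasDerivAt θ (c * (1 + cos (θ s))) s) (hθ0 : θ 0 = 0) :
    θ = fun s => 2 * arctan (c * s) :=
  ODE_solution_unique_univ (v := fun _ x => c * (1 + cos x)) (s := fun _ => Set.univ) (t₀ := 0)
    (fun _ => (lipschitzWith_const_mul_one_add_cos c).lipschitzOnWith)
    (fun s => ⟨hθ s, trivial⟩)
    (fun s => ⟨hasDerivAt_two_mul_arctan_const_mul c s, trivial⟩) (by simp [hθ0])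

lemma sub_div_add_self_eq_of_hasDerivAt {c : ℝ} (hc : c ≠ 0) {y θ : ℝ → ℝ}
    (hy : ∀ s, HasDerivAt y (cos (θ s)) s)
    (hθ : ∀ s, HasDerivAt θ (c * (1 + cos (θ s))) s) (s : ℝ) :
    y s - θ s / c + s = y 0 - θ 0 / c := by
  have hderiv : ∀ t, HasDerivAt (fun t => y t - θ t / c + t) 0 t := fun t =>
    (((hy t).sub ((hθ t).div_const c)).add (hasDerivAt_id t)).congr_deriv
      (by field_simp; ring)
  simpa using is_const_of_deriv_eq_zero (fun t => (hderiv t).differentiableAt)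
    (fun t => (hderiv t).deriv) s 0

lemma two_mul_arctan_mem_Ioo (x : ℝ) : 2 * arctan x ∈ Set.Ioo (-π) π := by
  constructor <;> linarith [neg_pi_div_two_lt_arctan x, arctan_lt_pi_div_two x]

lemma strictMono_two_mul_arctan_const_mul {c : ℝ} (hc : 0 < c) :
    StrictMono fun s => 2 * arctan (c * s) :=
  fun _ _ hab => mul_lt_mul_of_pos_left (arctan_strictMono (mul_lt_mul_of_pos_left hab hc)) two_pos

lemma tendsto_two_mul_arctan_const_mul_atTop {c : ℝ} (hc : 0 < c) :
    Tendsto (fun s => 2 * arctan (c * s)) atTop (𝓝 π) := by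
  have h := ((tendsto_arctan_atTop.mono_right nhdsWithin_le_nhds).comp
    (tendsto_id.const_mul_atTop hc)).const_mul 2
  rwa [mul_div_cancel₀ _ two_ne_zero] at h

lemma tendsto_two_mul_arctan_const_mul_atBot {c : ℝ} (hc : 0 < c) :
    Tendsto (fun s => 2 * arctan (c * s)) atBot (𝓝 (-π)) := by
  have h := ((tendsto_arctan_atBot.mono_right nhdsWithin_le_nhds).comp
    (tendsto_id.const_mul_atBot hc)).const_mul 2
  rwa [mul_neg, mul_div_cancel₀ _ two_ne_zero] at h

theorem stmt7_general (v₃ : ℝ) (hv : 0 < v₃)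
    (y θ : ℝ → ℝ)
    (hy : ∀ s, HasDerivAt y (Real.cos (θ s)) s)
    (hθ : ∀ s, HasDerivAt θ (v₃ * (1 + Real.cos (θ s))) s)
    (hy0 : y 0 = 0) (hθ0 : θ 0 = 0) :
    (∀ s, -Real.pi < θ s ∧ θ s < Real.pi) ∧
    StrictMono θ ∧
    Tendsto θ atTop (𝓝 Real.pi) ∧ Tendsto θ atBot (𝓝 (-Real.pi)) ∧
    (∀ s, 0 < s → y s = θ s / v₃ - s) ∧
    Tendsto y atTop atBot ∧ Tendsto y atBot atTop := by
  have hθ_eq := eq_two_mul_arctan_of_hasDerivAt hθ hθ0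
  have hy_eq : y = fun s => θ s / v₃ + -s := funext fun s => by
    have h := sub_div_add_self_eq_of_hasDerivAt hv.ne' hy hθ s
    rw [hy0, hθ0, zero_div, sub_zero] at h
    linarith
  have hθ_top : Tendsto θ atTop (𝓝 π) := hθ_eq ▸ tendsto_two_mul_arctan_const_mul_atTop hv
  have hθ_bot : Tendsto θ atBot (𝓝 (-π)) := hθ_eq ▸ tendsto_two_mul_arctan_const_mul_atBot hv
  refine ⟨fun s => hθ_eq ▸ two_mul_arctan_mem_Ioo _,
    hθ_eq ▸ strictMono_two_mul_arctan_const_mul hv, hθ_top, hθ_bot,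
    fun s _ => (congrFun hy_eq s).trans (sub_eq_add_neg _ _).symm, ?_, ?_⟩ <;> rw [hy_eq]
  · exact (hθ_top.div_const v₃).add_atBot tendsto_neg_atTop_atBot
  · exact (hθ_bot.div_const v₃).add_atTop tendsto_neg_atBot_atTop

/-- Critical case `λ = v₃/2` of the generating-curve system, with `θ 0 = 0` and `θ`
nonconstant: `-π < θ < π`, `θ` is strictly increasing with `θ → ±π` as `s → ±∞`,
`y s = θ s / v₃ - s` for `s > 0`, and `y → ∓∞` as `s → ±∞`. -/
theorem stmt7 (v₃ : ℝ) (hv : 0 < v₃)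
    (y z θ : ℝ → ℝ)
    (hy : ∀ s, HasDerivAt y (Real.cos (θ s)) s)
    (hz : ∀ s, HasDerivAt z (Real.sin (θ s)) s)
    (hθ : ∀ s, HasDerivAt θ (v₃ * (1 + Real.cos (θ s))) s)
    (hy0 : y 0 = 0) (hz0 : z 0 = 0) (hθ0 : θ 0 = 0)
    (hnc : ∃ s, θ s ≠ 0) :
    (∀ s, -Real.pi < θ s ∧ θ s < Real.pi) ∧
    StrictMono θ ∧
    Tendsto θ atTop (𝓝 Real.pi) ∧ Tendsto θ atBot (𝓝 (-Real.pi)) ∧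
    (∀ s, 0 < s → y s = θ s / v₃ - s) ∧
    Tendsto y atTop atBot ∧ Tendsto y atBot atTop :=
  stmt7_general v₃ hv y θ hy hθ hy0 hθ0
end

section
/- For λ = v₃/2 > 0, the function θ(s) = 2 arctan(v₃ s) satisfies θ'(s) = 2λ + v₃ cos θ(s) = v₃(1 + cos θ(s)) for all s ∈ ℝ, and the curve α(s) = ( −s + (2/v₃) arctan(v₃ s), (1/v₃) log(1 + s²v₃²) ) satisfies α'(s) = (cos θ(s), sin θ(s)). -/
open Real

namespace Real

theorem cos_two_mul_arctan (x : ℝ) : cos (2 * arctan x) = (1 - x ^ 2) / (1 + x ^ 2) := by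
  have : 1 + x ^ 2 ≠ 0 := by positivity
  rw [cos_two_mul, cos_sq_arctan]
  field_simp
  ring

theorem sin_two_mul_arctan (x : ℝ) : sin (2 * arctan x) = 2 * x / (1 + x ^ 2) := by
  rw [sin_two_mul, sin_arctan, cos_arctan, mul_assoc, div_mul_div_comm, mul_one,
    mul_self_sqrt (by positivity), mul_div_assoc]

theorem hasDerivAt_arctan_const_mul (c s : ℝ) :
    HasDerivAt (fun u => arctan (c * u)) (c / (1 + (c * s) ^ 2)) s :=
  ((hasDerivAt_id' s).const_mul c).arctan.congr_deriv (by ring)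

end Real

/-- For `λ = v₃/2 > 0`, the function `θ(s) = 2 arctan(v₃ s)` satisfies
`θ' = 2λ + v₃ cos θ = v₃ (1 + cos θ)` on `ℝ`, and the curve
`α(s) = (-s + (2/v₃) arctan(v₃ s), (1/v₃) log(1 + s²v₃²))` satisfies
`α'(s) = (cos θ(s), sin θ(s))`. -/
theorem stmt10 (v₃ : ℝ) (hv : 0 < v₃) (θ : ℝ → ℝ)
    (hθdef : ∀ s, θ s = 2 * Real.arctan (v₃ * s)) :
    (∀ s, HasDerivAt θ (v₃ * (1 + Real.cos (θ s))) s) ∧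
    (∀ s, v₃ * (1 + Real.cos (θ s)) = 2 * (v₃/2) + v₃ * Real.cos (θ s)) ∧
    (∀ s : ℝ, HasDerivAt (fun u => -u + (2/v₃) * Real.arctan (v₃ * u))
      (Real.cos (θ s)) s) ∧
    (∀ s : ℝ, HasDerivAt (fun u => (1/v₃) * Real.log (1 + u^2 * v₃^2))
      (Real.sin (θ s)) s) := by
  obtain rfl : θ = fun u => 2 * arctan (v₃ * u) := funext hθdef
  simp only [cos_two_mul_arctan, sin_two_mul_arctan]
  have hv₃ : v₃ ≠ 0 := hv.ne'
  refine ⟨fun s => ?_, fun s => by ring, fun s => ?_, fun s => ?_⟩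
  · have : 1 + (v₃ * s) ^ 2 ≠ 0 := by positivity
    refine ((hasDerivAt_arctan_const_mul v₃ s).const_mul 2).congr_deriv ?_
    field_simp
    ring
  · have : 1 + (v₃ * s) ^ 2 ≠ 0 := by positivity
    refine ((hasDerivAt_neg s).add
      ((hasDerivAt_arctan_const_mul v₃ s).const_mul (2 / v₃))).congr_deriv ?_
    field_simp
    ring
  · have : 1 + s ^ 2 * v₃ ^ 2 ≠ 0 := by positivity
    refine ((((hasDerivAt_pow 2 s).mul_const (v₃ ^ 2)).const_add 1).log this
      |>.const_mul (1 / v₃)).congr_deriv ?_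
    field_simp
    ring
end

section
/- Let f, g be smooth real functions on intervals I, J, λ ≠ 0, and v = (v₁, v₂, v₃) a unit vector. Suppose the translation surface z = f(x) + g(y) satisfies the λ-translating soliton equation (1+g'²)f'' + (1+f'²)g'' = W^{3/2}·(2λ) + W·(−v₁f' − v₂g' + v₃), where W = 1 + f'² + g'². Then f'·f''·g'·g'' ≡ 0 on I × J; consequently (up to exchanging f and g) f is affine, f(x) = ax + b, and g satisfies (1+a²)g'' = 2λ(1+a²+g'²)^{3/2} + (1+a²+g'²)(−v₁a − v₂g' + v₃), so the surface is cylindrical with rulings parallel to (1, 0, a). -/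
open Real Set Filter

open Real Set Filter

lemma diff1 {f : ℝ → ℝ} (hf : ContDiff ℝ (⊤ : ℕ∞) f) : Differentiable ℝ (deriv f) := by
  have h : ContDiff ℝ ((⊤:ℕ∞):WithTop ℕ∞) f := hf.of_le (by simp)
  exact ((contDiff_infty_iff_deriv.1 h).2).differentiable (by simp)

lemma diff2 {f : ℝ → ℝ} (hf : ContDiff ℝ (⊤ : ℕ∞) f) : Differentiable ℝ (deriv (deriv f)) := by
  have h : ContDiff ℝ ((⊤:ℕ∞):WithTop ℕ∞) f := hf.of_le (by simp)
  have h2 := (contDiff_infty_iff_deriv.1 h).2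
  exact ((contDiff_infty_iff_deriv.1 h2).2).differentiable (by simp)

lemma keyE1 (lam v₁ v₂ v₃ : ℝ) {I J : Set ℝ} (hIo : IsOpen I)
    {f g : ℝ → ℝ} (hf : ContDiff ℝ (⊤ : ℕ∞) f)
    (heq : ∀ x ∈ I, ∀ y ∈ J,
      (1 + deriv g y ^ 2) * deriv (deriv f) x + (1 + deriv f x ^ 2) * deriv (deriv g) y
        = (1 + deriv f x ^ 2 + deriv g y ^ 2) ^ ((3:ℝ)/2) * (2*lam)
          + (1 + deriv f x ^ 2 + deriv g y ^ 2) *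
            (-v₁ * deriv f x - v₂ * deriv g y + v₃)) :
    ∀ x ∈ I, ∀ y ∈ J,
      (1 + deriv g y ^ 2) * deriv (deriv (deriv f)) x
        + 2 * deriv f x * deriv (deriv f) x * deriv (deriv g) y
      = 6*lam * deriv f x * deriv (deriv f) x *
            (1 + deriv f x ^ 2 + deriv g y ^ 2) ^ ((1:ℝ)/2)
        + 2 * deriv f x * deriv (deriv f) x * (-v₁ * deriv f x - v₂ * deriv g y + v₃)
        - v₁ * deriv (deriv f) x * (1 + deriv f x ^ 2 + deriv g y ^ 2) := by
  intro x hx y hy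
  set Q := deriv g y with hQ
  set G2 := deriv (deriv g) y with hG2
  set p := deriv f with hp
  set Φ : ℝ → ℝ := fun t =>
    (1 + Q ^ 2) * deriv p t + (1 + p t ^ 2) * G2
      - ((1 + p t ^ 2 + Q ^ 2) ^ ((3:ℝ)/2) * (2*lam)
          + (1 + p t ^ 2 + Q ^ 2) * (-v₁ * p t - v₂ * Q + v₃)) with hΦ
  have hΦ0 : ∀ t ∈ I, Φ t = 0 := by
    intro t ht
    have h := heq t ht y hy
    rw [← hQ, ← hG2] at h
    show (1 + Q ^ 2) * deriv p t + (1 + p t ^ 2) * G2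
      - ((1 + p t ^ 2 + Q ^ 2) ^ ((3:ℝ)/2) * (2*lam)
          + (1 + p t ^ 2 + Q ^ 2) * (-v₁ * p t - v₂ * Q + v₃)) = 0
    linarith
  have hd0 : deriv Φ x = 0 := by
    have hev : Φ =ᶠ[nhds x] fun _ => (0:ℝ) :=
      Filter.eventually_of_mem (hIo.mem_nhds hx) hΦ0
    rw [hev.deriv_eq, deriv_const]
  have hpd : HasDerivAt p (deriv p x) x := ((diff1 hf) x).hasDerivAt
  have hp1d : HasDerivAt (deriv p) (deriv (deriv p) x) x := ((diff2 hf) x).hasDerivAt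
  have hWpos : (0:ℝ) < 1 + p x ^ 2 + Q ^ 2 := by positivity
  have hW : HasDerivAt (fun t => 1 + p t ^ 2 + Q ^ 2) (2 * p x * deriv p x) x := by
    have := ((hpd.pow 2).const_add 1).add_const (Q ^ 2)
    rw [show (2:ℝ) * p x * deriv p x = ((2:ℕ):ℝ) * p x ^ (2-1) * deriv p x by norm_num]
    exact this
  have hW32 : HasDerivAt (fun t => (1 + p t ^ 2 + Q ^ 2) ^ ((3:ℝ)/2))
      (3 * p x * deriv p x * (1 + p x ^ 2 + Q ^ 2) ^ ((1:ℝ)/2)) x := by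
    have h := hW.rpow_const (p := (3:ℝ)/2) (Or.inl (ne_of_gt hWpos))
    rw [show (3:ℝ)/2 - 1 = 1/2 by norm_num] at h
    convert h using 1
    ring
  have h1 : HasDerivAt (fun t => (1 + Q ^ 2) * deriv p t)
      ((1 + Q ^ 2) * deriv (deriv p) x) x := hp1d.const_mul _
  have h2 : HasDerivAt (fun t => (1 + p t ^ 2) * G2) (2 * p x * deriv p x * G2) x := by
    have := ((hpd.pow 2).const_add 1).mul_const G2
    rw [show (2:ℝ) * p x * deriv p x * G2 = ((2:ℕ):ℝ) * p x ^ (2-1) * deriv p x * G2 by norm_num]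
    exact this
  have h3 : HasDerivAt (fun t => (1 + p t ^ 2 + Q ^ 2) ^ ((3:ℝ)/2) * (2*lam))
      (3 * p x * deriv p x * (1 + p x ^ 2 + Q ^ 2) ^ ((1:ℝ)/2) * (2*lam)) x :=
    hW32.mul_const _
  have h4 : HasDerivAt (fun t => -v₁ * p t - v₂ * Q + v₃) (-v₁ * deriv p x) x :=
    ((hpd.const_mul (-v₁)).sub_const (v₂ * Q)).add_const v₃
  have h5 : HasDerivAt (fun t => (1 + p t ^ 2 + Q ^ 2) * (-v₁ * p t - v₂ * Q + v₃))
      ((2 * p x * deriv p x) * (-v₁ * p x - v₂ * Q + v₃)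
        + (1 + p x ^ 2 + Q ^ 2) * (-v₁ * deriv p x)) x := hW.mul h4
  have hΦd : HasDerivAt Φ
      ((1 + Q ^ 2) * deriv (deriv p) x + 2 * p x * deriv p x * G2
        - (3 * p x * deriv p x * (1 + p x ^ 2 + Q ^ 2) ^ ((1:ℝ)/2) * (2*lam)
            + ((2 * p x * deriv p x) * (-v₁ * p x - v₂ * Q + v₃)
            + (1 + p x ^ 2 + Q ^ 2) * (-v₁ * deriv p x)))) x :=
    (h1.add h2).sub (h3.add h5)
  have hkey := hΦd.deriv
  rw [hd0] at hkey
  simp only [hp] at hkey ⊢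
  linarith [hkey.symm]


lemma keyE2 (lam v₁ v₂ v₃ : ℝ) {I J : Set ℝ} (hJo : IsOpen J)
    {f g : ℝ → ℝ} (hg : ContDiff ℝ (⊤ : ℕ∞) g)
    (hE1 : ∀ x ∈ I, ∀ y ∈ J,
      (1 + deriv g y ^ 2) * deriv (deriv (deriv f)) x
        + 2 * deriv f x * deriv (deriv f) x * deriv (deriv g) y
      = 6*lam * deriv f x * deriv (deriv f) x *
            (1 + deriv f x ^ 2 + deriv g y ^ 2) ^ ((1:ℝ)/2)
        + 2 * deriv f x * deriv (deriv f) x * (-v₁ * deriv f x - v₂ * deriv g y + v₃)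
        - v₁ * deriv (deriv f) x * (1 + deriv f x ^ 2 + deriv g y ^ 2)) :
    ∀ x ∈ I, ∀ y ∈ J,
      2 * deriv g y * deriv (deriv g) y * deriv (deriv (deriv f)) x
        + 2 * deriv f x * deriv (deriv f) x * deriv (deriv (deriv g)) y
      = 6*lam * deriv f x * deriv (deriv f) x * deriv g y * deriv (deriv g) y *
            (1 + deriv f x ^ 2 + deriv g y ^ 2) ^ (-(1:ℝ)/2)
        - 2 * v₂ * deriv f x * deriv (deriv f) x * deriv (deriv g) y
        - 2 * v₁ * deriv (deriv f) x * deriv g y * deriv (deriv g) y := by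
  intro x hx y hy
  set P := deriv f x with hP
  set P1 := deriv (deriv f) x with hP1
  set P2 := deriv (deriv (deriv f)) x with hP2
  set q := deriv g with hq
  set Ψ : ℝ → ℝ := fun t =>
    (1 + q t ^ 2) * P2 + 2 * P * P1 * deriv q t
      - (6*lam * P * P1 * (1 + P ^ 2 + q t ^ 2) ^ ((1:ℝ)/2)
        + 2 * P * P1 * (-v₁ * P - v₂ * q t + v₃)
        - v₁ * P1 * (1 + P ^ 2 + q t ^ 2)) with hΨ
  have hΨ0 : ∀ t ∈ J, Ψ t = 0 := by
    intro t ht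
    have h := hE1 x hx t ht
    rw [← hP, ← hP1, ← hP2] at h
    show (1 + q t ^ 2) * P2 + 2 * P * P1 * deriv q t
      - (6*lam * P * P1 * (1 + P ^ 2 + q t ^ 2) ^ ((1:ℝ)/2)
        + 2 * P * P1 * (-v₁ * P - v₂ * q t + v₃)
        - v₁ * P1 * (1 + P ^ 2 + q t ^ 2)) = 0
    linarith
  have hd0 : deriv Ψ y = 0 := by
    have hev : Ψ =ᶠ[nhds y] fun _ => (0:ℝ) :=
      Filter.eventually_of_mem (hJo.mem_nhds hy) hΨ0
    rw [hev.deriv_eq, deriv_const]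
  have hqd : HasDerivAt q (deriv q y) y := ((diff1 hg) y).hasDerivAt
  have hq1d : HasDerivAt (deriv q) (deriv (deriv q) y) y := ((diff2 hg) y).hasDerivAt
  have hWpos : (0:ℝ) < 1 + P ^ 2 + q y ^ 2 := by positivity
  have hW : HasDerivAt (fun t => 1 + P ^ 2 + q t ^ 2) (2 * q y * deriv q y) y := by
    have := ((hqd.pow 2).const_add (1 + P ^ 2))
    have h' : HasDerivAt (fun t => (1 + P ^ 2) + q t ^ 2)
        ((2:ℕ) * q y ^ (2-1) * deriv q y) y := this
    convert h' using 1
    norm_num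
  have hW12 : HasDerivAt (fun t => (1 + P ^ 2 + q t ^ 2) ^ ((1:ℝ)/2))
      (q y * deriv q y * (1 + P ^ 2 + q y ^ 2) ^ (-(1:ℝ)/2)) y := by
    have h := hW.rpow_const (p := (1:ℝ)/2) (Or.inl (ne_of_gt hWpos))
    rw [show (1:ℝ)/2 - 1 = -(1:ℝ)/2 by norm_num] at h
    convert h using 1
    ring
  have h1 : HasDerivAt (fun t => (1 + q t ^ 2) * P2)
      (2 * q y * deriv q y * P2) y := by
    have := ((hqd.pow 2).const_add 1).mul_const P2
    rw [show (2:ℝ) * q y * deriv q y * P2 = ((2:ℕ):ℝ) * q y ^ (2-1) * deriv q y * P2 by norm_num]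
    exact this
  have h2 : HasDerivAt (fun t => 2 * P * P1 * deriv q t)
      (2 * P * P1 * deriv (deriv q) y) y := hq1d.const_mul _
  have h3 : HasDerivAt (fun t => 6*lam * P * P1 * (1 + P ^ 2 + q t ^ 2) ^ ((1:ℝ)/2))
      (6*lam * P * P1 * (q y * deriv q y * (1 + P ^ 2 + q y ^ 2) ^ (-(1:ℝ)/2))) y :=
    hW12.const_mul _
  have h4 : HasDerivAt (fun t => 2 * P * P1 * (-v₁ * P - v₂ * q t + v₃))
      (2 * P * P1 * (-v₂ * deriv q y)) y := by
    have hin : HasDerivAt (fun t => -v₁ * P - v₂ * q t + v₃) (-v₂ * deriv q y) y := by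
      have := ((hqd.const_mul v₂).const_sub (-v₁ * P)).add_const v₃
      simpa only [neg_mul] using this
    exact hin.const_mul _
  have h5 : HasDerivAt (fun t => v₁ * P1 * (1 + P ^ 2 + q t ^ 2))
      (v₁ * P1 * (2 * q y * deriv q y)) y := hW.const_mul _
  have hΨd : HasDerivAt Ψ
      (2 * q y * deriv q y * P2 + 2 * P * P1 * deriv (deriv q) y
        - (6*lam * P * P1 * (q y * deriv q y * (1 + P ^ 2 + q y ^ 2) ^ (-(1:ℝ)/2))
          + 2 * P * P1 * (-v₂ * deriv q y)
          - v₁ * P1 * (2 * q y * deriv q y))) y :=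
    (h1.add h2).sub ((h3.add h4).sub h5)
  have hkey := hΨd.deriv
  rw [hd0] at hkey
  simp only [hq] at hkey ⊢
  linarith [hkey.symm]

lemma inv_sqrt_diff (a b : ℝ) (ha : 0 < a) (hb : 0 < b) :
    (√a)⁻¹ - (√b)⁻¹ = (b - a) / (√a * √b * (√a + √b)) := by
  have sa : 0 < √a := Real.sqrt_pos.2 ha
  have sb : 0 < √b := Real.sqrt_pos.2 hb
  have ha' := Real.sq_sqrt ha.le
  have hb' := Real.sq_sqrt hb.le
  field_simp
  linear_combination hb' - ha'

lemma key_ineq (c₁ c₂ q₁ q₂ : ℝ) (hc₁ : 0 < c₁) (hcc : c₁ < c₂) (hq₁ : 0 ≤ q₁)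
    (hqq : q₁ < q₂) :
    (√(c₂+q₁))⁻¹ - (√(c₂+q₂))⁻¹ < (√(c₁+q₁))⁻¹ - (√(c₁+q₂))⁻¹ := by
  have p11 : (0:ℝ) < c₁ + q₁ := by linarith
  have p12 : (0:ℝ) < c₁ + q₂ := by linarith
  have p21 : (0:ℝ) < c₂ + q₁ := by linarith
  have p22 : (0:ℝ) < c₂ + q₂ := by linarith
  rw [inv_sqrt_diff _ _ p11 p12, inv_sqrt_diff _ _ p21 p22,
    show c₁+q₂-(c₁+q₁) = q₂-q₁ by ring, show c₂+q₂-(c₂+q₁) = q₂-q₁ by ring]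
  have s11 : 0 < √(c₁+q₁) := Real.sqrt_pos.2 p11
  have s12 : 0 < √(c₁+q₂) := Real.sqrt_pos.2 p12
  have s21 : 0 < √(c₂+q₁) := Real.sqrt_pos.2 p21
  have s22 : 0 < √(c₂+q₂) := Real.sqrt_pos.2 p22
  have m1 : √(c₁+q₁) < √(c₂+q₁) := Real.sqrt_lt_sqrt p11.le (by linarith)
  have m2 : √(c₁+q₂) < √(c₂+q₂) := Real.sqrt_lt_sqrt p12.le (by linarith)
  apply div_lt_div_of_pos_left (by linarith) (by positivity)
  calc √(c₁+q₁) * √(c₁+q₂) * (√(c₁+q₁) + √(c₁+q₂))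
      < √(c₂+q₁) * √(c₂+q₂) * (√(c₂+q₁) + √(c₂+q₂)) := by
        have m3 : √(c₁+q₁) * √(c₁+q₂) < √(c₂+q₁) * √(c₂+q₂) :=
          mul_lt_mul m1 m2.le s12 s21.le
        have m4 : √(c₁+q₁) + √(c₁+q₂) < √(c₂+q₁) + √(c₂+q₂) := add_lt_add m1 m2
        nlinarith [m3, m4, mul_pos s11 s12, mul_pos s21 s22]

lemma final4 (c₁ c₂ q₁ q₂ : ℝ) (hc₁ : 0 < c₁) (hc₂ : 0 < c₂) (hq₁ : 0 ≤ q₁)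
    (hq₂ : 0 ≤ q₂) (hc : c₁ ≠ c₂) (hq : q₁ ≠ q₂)
    (h : (c₁+q₁) ^ (-(1:ℝ)/2) - (c₂+q₁) ^ (-(1:ℝ)/2)
       = (c₁+q₂) ^ (-(1:ℝ)/2) - (c₂+q₂) ^ (-(1:ℝ)/2)) : False := by
  have conv : ∀ t:ℝ, 0 < t → t ^ (-(1:ℝ)/2) = (√t)⁻¹ := by
    intro t ht
    rw [show (-(1:ℝ)/2) = -(1/2) by ring, Real.rpow_neg ht.le, Real.sqrt_eq_rpow]
  rw [conv _ (by linarith), conv _ (by linarith), conv _ (by linarith),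
    conv _ (by linarith)] at h
  rcases hc.lt_or_gt with h1 | h1 <;> rcases hq.lt_or_gt with h2 | h2
  · have := key_ineq c₁ c₂ q₁ q₂ hc₁ h1 hq₁ h2; linarith
  · have := key_ineq c₁ c₂ q₂ q₁ hc₁ h1 hq₂ h2; linarith
  · have := key_ineq c₂ c₁ q₁ q₂ hc₂ h1 hq₁ h2; linarith
  · have := key_ineq c₂ c₁ q₂ q₁ hc₂ h1 hq₂ h2; linarith

lemma ratio (lam v₁ v₂ P P1 P2 q q1 q2 S : ℝ) (hP : P ≠ 0) (hP1 : P1 ≠ 0)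
    (hq : q ≠ 0) (hq1 : q1 ≠ 0)
    (hE : 2*q*q1*P2 + 2*P*P1*q2
      = 6*lam*P*P1*q*q1*S - 2*v₂*P*P1*q1 - 2*v₁*P1*q*q1) :
    P2/(P*P1) + v₁/P + q2/(q*q1) + v₂/q = 3*lam*S := by
  field_simp
  linear_combination hE/2


lemma const_of_deriv_zero {s : Set ℝ} (hs : Convex ℝ s) (hso : IsOpen s)
    {h : ℝ → ℝ} (hd : Differentiable ℝ h) (h0 : ∀ x ∈ s, deriv h x = 0)
    {x y : ℝ} (hx : x ∈ s) (hy : y ∈ s) : h x = h y := by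
  apply hs.is_const_of_fderivWithin_eq_zero hd.differentiableOn ?_ hx hy
  intro z hz
  rw [fderivWithin_of_isOpen hso hz]
  have hz' : HasFDerivAt h (0 : ℝ →L[ℝ] ℝ) z := by
    have h1 := (hd z).hasDerivAt
    rw [h0 z hz] at h1
    have h2 := hasDerivAt_iff_hasFDerivAt.1 h1
    have h3 : (ContinuousLinearMap.toSpanSingleton ℝ (0:ℝ)) = 0 := by
      ext; simp
    rwa [h3] at h2
  exact hz'.fderiv

lemma exists_near {S : Set ℝ} (hS : IsOpen S) {h : ℝ → ℝ}
    {x₀ : ℝ} (hx₀ : x₀ ∈ S) (hne : deriv h x₀ ≠ 0) : ∃ x ∈ S, h x ≠ h x₀ := by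
  by_contra hcon
  push_neg at hcon
  have hev : h =ᶠ[nhds x₀] fun _ => h x₀ :=
    Filter.eventually_of_mem (hS.mem_nhds hx₀) hcon
  rw [hev.deriv_eq, deriv_const] at hne
  exact hne rfl

lemma affine_of_prod_zero {I : Set ℝ} (hIo : IsOpen I) (hIc : Convex ℝ I)
    {x₀ : ℝ} (hx₀ : x₀ ∈ I) {f : ℝ → ℝ} (hf : ContDiff ℝ (⊤ : ℕ∞) f)
    (h0 : ∀ x ∈ I, deriv f x * deriv (deriv f) x = 0) :
    ∃ a b : ℝ, (∀ x ∈ I, f x = a * x + b) ∧ (∀ x ∈ I, deriv f x = a) ∧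
      (∀ x ∈ I, deriv (deriv f) x = 0) := by
  have hd1 := diff1 hf
  set a := deriv f x₀ with ha
  -- (deriv f)^2 is constant on I
  have hsqd : ∀ x ∈ I, deriv (fun t => deriv f t ^ 2) x = 0 := by
    intro x hx
    have hpd : HasDerivAt (deriv f) (deriv (deriv f) x) x := (hd1 x).hasDerivAt
    have : deriv (fun t => deriv f t ^ 2) x = _ := (hpd.pow 2).deriv
    rw [this]
    have := h0 x hx
    push_cast
    nlinarith [h0 x hx]
  have hsq : ∀ x ∈ I, deriv f x ^ 2 = a ^ 2 := fun x hx =>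
    const_of_deriv_zero hIc hIo (hd1.pow 2) hsqd hx hx₀
  -- deriv f = a on I
  have hda : ∀ x ∈ I, deriv f x = a := by
    intro x hx
    have h2 := hsq x hx
    have hfac : (deriv f x - a) * (deriv f x + a) = 0 := by nlinarith
    rcases mul_eq_zero.1 hfac with h | h
    · linarith
    · -- deriv f x = -a; use IVT to show a = 0
      by_cases haz : a = 0
      · rw [haz] at h ⊢; linarith
      · exfalso
        have hsub : uIcc x₀ x ⊆ I := (hIc.ordConnected).uIcc_subset hx₀ hx
        have hcont : ContinuousOn (deriv f) (uIcc x₀ x) :=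
          hd1.continuous.continuousOn
        have hmem : (0:ℝ) ∈ uIcc (deriv f x₀) (deriv f x) := by
          rw [← ha, show deriv f x = -a by linarith]
          rcases le_total 0 a with h' | h'
          · exact Set.mem_uIcc.2 (Or.inr ⟨by linarith, by linarith⟩)
          · exact Set.mem_uIcc.2 (Or.inl ⟨by linarith, by linarith⟩)
        obtain ⟨z, hz, hz0⟩ := intermediate_value_uIcc hcont hmem
        have := hsq z (hsub hz)
        rw [hz0] at this
        exact haz (by nlinarith)
  -- second derivative vanishes on I
  have hdd : ∀ x ∈ I, deriv (deriv f) x = 0 := by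
    intro x hx
    have hev : deriv f =ᶠ[nhds x] fun _ => a := by
      filter_upwards [hIo.mem_nhds hx] with t ht using hda t ht
    rw [hev.deriv_eq, deriv_const]
  -- f is affine
  refine ⟨a, f x₀ - a * x₀, fun x hx => ?_, hda, hdd⟩
  have hF : Differentiable ℝ (fun t => f t - a * t) := by
    have : Differentiable ℝ f := hf.differentiable (by simp)
    fun_prop
  have hF0 : ∀ t ∈ I, deriv (fun t => f t - a * t) t = 0 := by
    intro t ht
    have h1 : HasDerivAt f (deriv f t) t :=
      ((hf.differentiable (by simp)) t).hasDerivAt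
    have hlin : HasDerivAt (fun t : ℝ => a * t) a t := by
      simpa using (hasDerivAt_id t).const_mul a
    have h2 : HasDerivAt (fun t => f t - a * t) (deriv f t - a) t := h1.sub hlin
    rw [h2.deriv, hda t ht]
    ring
  have := const_of_deriv_zero hIc hIo hF hF0 hx hx₀
  linarith


/-- Translation surfaces `z = f(x) + g(y)` that are `λ`-translating solitons with
`λ ≠ 0`.  If the soliton equation
`(1+g'²)f'' + (1+f'²)g'' = 2λ W^{3/2} + W(-v₁f' - v₂g' + v₃)` (with
`W = 1 + f'² + g'²`) holds on `I × J`, then `f' f'' g' g'' ≡ 0` on `I × J`;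
consequently, up to exchanging the roles of `f` and `g`, `f(x) = ax + b` is affine
and `g` satisfies `(1+a²)g'' = 2λ(1+a²+g'²)^{3/2} + (1+a²+g'²)(-v₁a - v₂g' + v₃)`,
so the surface is cylindrical with rulings parallel to `(1, 0, a)`. -/
theorem stmt12 (lam v₁ v₂ v₃ : ℝ) (hlam : lam ≠ 0) (hv : v₁^2 + v₂^2 + v₃^2 = 1)
    (I J : Set ℝ) (hIo : IsOpen I) (hIc : Convex ℝ I) (hIne : I.Nonempty)
    (hJo : IsOpen J) (hJc : Convex ℝ J) (hJne : J.Nonempty)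
    (f g : ℝ → ℝ) (hf : ContDiff ℝ (⊤ : ℕ∞) f) (hg : ContDiff ℝ (⊤ : ℕ∞) g)
    (heq : ∀ x ∈ I, ∀ y ∈ J,
      (1 + deriv g y ^ 2) * deriv (deriv f) x + (1 + deriv f x ^ 2) * deriv (deriv g) y
        = (1 + deriv f x ^ 2 + deriv g y ^ 2) ^ ((3:ℝ)/2) * (2*lam)
          + (1 + deriv f x ^ 2 + deriv g y ^ 2) *
            (-v₁ * deriv f x - v₂ * deriv g y + v₃)) :
    (∀ x ∈ I, ∀ y ∈ J,
      deriv f x * deriv (deriv f) x * deriv g y * deriv (deriv g) y = 0) ∧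
    ((∃ a b : ℝ, (∀ x ∈ I, f x = a * x + b) ∧
        ∀ y ∈ J, (1 + a^2) * deriv (deriv g) y
          = 2*lam * (1 + a^2 + deriv g y ^ 2) ^ ((3:ℝ)/2)
            + (1 + a^2 + deriv g y ^ 2) * (-v₁ * a - v₂ * deriv g y + v₃)) ∨
     (∃ a b : ℝ, (∀ y ∈ J, g y = a * y + b) ∧
        ∀ x ∈ I, (1 + a^2) * deriv (deriv f) x
          = 2*lam * (1 + a^2 + deriv f x ^ 2) ^ ((3:ℝ)/2)
            + (1 + a^2 + deriv f x ^ 2) * (-v₂ * a - v₁ * deriv f x + v₃))) := by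
  have hE1 := keyE1 lam v₁ v₂ v₃ hIo hf heq
  have hE2 := keyE2 lam v₁ v₂ v₃ hJo hg hE1
  have part1 : ∀ x ∈ I, ∀ y ∈ J,
      deriv f x * deriv (deriv f) x * deriv g y * deriv (deriv g) y = 0 := by
    by_contra hcon
    push_neg at hcon
    obtain ⟨x₀, hx₀, y₀, hy₀, hne⟩ := hcon
    have hP : deriv f x₀ ≠ 0 := fun h => hne (by rw [h]; ring)
    have hP1 : deriv (deriv f) x₀ ≠ 0 := fun h => hne (by rw [h]; ring)
    have hQ : deriv g y₀ ≠ 0 := fun h => hne (by rw [h]; ring)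
    have hQ1 : deriv (deriv g) y₀ ≠ 0 := fun h => hne (by rw [h]; ring)
    -- open neighbourhoods where the products are nonzero
    have hSIo : IsOpen (I ∩ {t | deriv f t * deriv (deriv f) t ≠ 0}) := by
      apply hIo.inter
      have hcont : Continuous (fun t => deriv f t * deriv (deriv f) t) :=
        ((diff1 hf).continuous.mul (diff2 hf).continuous)
      exact isOpen_compl_singleton.preimage hcont
    have hSJo : IsOpen (J ∩ {t | deriv g t * deriv (deriv g) t ≠ 0}) := by
      apply hJo.inter
      have hcont : Continuous (fun t => deriv g t * deriv (deriv g) t) :=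
        ((diff1 hg).continuous.mul (diff2 hg).continuous)
      exact isOpen_compl_singleton.preimage hcont
    have hx₀S : x₀ ∈ I ∩ {t | deriv f t * deriv (deriv f) t ≠ 0} :=
      ⟨hx₀, mul_ne_zero hP hP1⟩
    have hy₀S : y₀ ∈ J ∩ {t | deriv g t * deriv (deriv g) t ≠ 0} :=
      ⟨hy₀, mul_ne_zero hQ hQ1⟩
    -- find points with different squared slopes
    have hdx : deriv (fun t => deriv f t ^ 2) x₀ ≠ 0 := by
      rw [show deriv (fun t => deriv f t ^ 2) x₀ = _ from (((diff1 hf) x₀).hasDerivAt.pow 2).deriv]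
      have : ((2:ℕ):ℝ) * deriv f x₀ ^ (2-1) * deriv (deriv f) x₀
          = 2 * deriv f x₀ * deriv (deriv f) x₀ := by norm_num
      rw [this]
      exact mul_ne_zero (mul_ne_zero two_ne_zero hP) hP1
    have hdy : deriv (fun t => deriv g t ^ 2) y₀ ≠ 0 := by
      rw [show deriv (fun t => deriv g t ^ 2) y₀ = _ from (((diff1 hg) y₀).hasDerivAt.pow 2).deriv]
      have : ((2:ℕ):ℝ) * deriv g y₀ ^ (2-1) * deriv (deriv g) y₀
          = 2 * deriv g y₀ * deriv (deriv g) y₀ := by norm_num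
      rw [this]
      exact mul_ne_zero (mul_ne_zero two_ne_zero hQ) hQ1
    obtain ⟨x₂, hx₂S, hx₂ne⟩ := exists_near hSIo hx₀S hdx
    obtain ⟨y₂, hy₂S, hy₂ne⟩ := exists_near hSJo hy₀S hdy
    have hP₂ : deriv f x₂ ≠ 0 := fun h => hx₂S.2 (by rw [h]; ring)
    have hP1₂ : deriv (deriv f) x₂ ≠ 0 := fun h => hx₂S.2 (by rw [h]; ring)
    have hQ₂ : deriv g y₂ ≠ 0 := fun h => hy₂S.2 (by rw [h]; ring)
    have hQ1₂ : deriv (deriv g) y₂ ≠ 0 := fun h => hy₂S.2 (by rw [h]; ring)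
    -- the separated equation at the four corner points
    have h11 := ratio lam v₁ v₂ _ _ _ _ _ _ _ hP hP1 hQ hQ1 (hE2 x₀ hx₀ y₀ hy₀)
    have h12 := ratio lam v₁ v₂ _ _ _ _ _ _ _ hP hP1 hQ₂ hQ1₂ (hE2 x₀ hx₀ y₂ hy₂S.1)
    have h21 := ratio lam v₁ v₂ _ _ _ _ _ _ _ hP₂ hP1₂ hQ hQ1 (hE2 x₂ hx₂S.1 y₀ hy₀)
    have h22 := ratio lam v₁ v₂ _ _ _ _ _ _ _ hP₂ hP1₂ hQ₂ hQ1₂ (hE2 x₂ hx₂S.1 y₂ hy₂S.1)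
    have h3l : (3*lam) ≠ 0 := by
      intro h; exact hlam (by linarith)
    have key : (1 + deriv f x₀ ^ 2 + deriv g y₀ ^ 2) ^ (-(1:ℝ)/2)
          - (1 + deriv f x₂ ^ 2 + deriv g y₀ ^ 2) ^ (-(1:ℝ)/2)
        = (1 + deriv f x₀ ^ 2 + deriv g y₂ ^ 2) ^ (-(1:ℝ)/2)
          - (1 + deriv f x₂ ^ 2 + deriv g y₂ ^ 2) ^ (-(1:ℝ)/2) := by
      apply mul_left_cancel₀ h3l
      have e1 : 3*lam*((1 + deriv f x₀ ^ 2 + deriv g y₀ ^ 2) ^ (-(1:ℝ)/2)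
          - (1 + deriv f x₂ ^ 2 + deriv g y₀ ^ 2) ^ (-(1:ℝ)/2))
        = 3*lam*((1 + deriv f x₀ ^ 2 + deriv g y₂ ^ 2) ^ (-(1:ℝ)/2)
          - (1 + deriv f x₂ ^ 2 + deriv g y₂ ^ 2) ^ (-(1:ℝ)/2)) := by
        linarith [h11, h12, h21, h22]
      exact e1
    exact final4 (1 + deriv f x₀ ^ 2) (1 + deriv f x₂ ^ 2)
      (deriv g y₀ ^ 2) (deriv g y₂ ^ 2) (by positivity) (by positivity)
      (sq_nonneg _) (sq_nonneg _)
      (fun h => hx₂ne (by linarith)) (fun h => hy₂ne h.symm) key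
  refine ⟨part1, ?_⟩
  by_cases hall : ∀ x ∈ I, deriv f x * deriv (deriv f) x = 0
  · left
    obtain ⟨x₀, hx₀⟩ := hIne
    obtain ⟨a, b, hab, hda, hdd⟩ := affine_of_prod_zero hIo hIc hx₀ hf hall
    refine ⟨a, b, hab, fun y hy => ?_⟩
    have h := heq x₀ hx₀ y hy
    rw [hda x₀ hx₀, hdd x₀ hx₀] at h
    linarith
  · right
    push_neg at hall
    obtain ⟨x₀, hx₀, hPP⟩ := hall
    obtain ⟨y₀, hy₀⟩ := hJne
    have hgz : ∀ y ∈ J, deriv g y * deriv (deriv g) y = 0 := by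
      intro y hy
      have h := part1 x₀ hx₀ y hy
      rcases mul_eq_zero.1 h with h' | h'
      · rcases mul_eq_zero.1 h' with h'' | h''
        · exact absurd h'' hPP
        · rw [h'']; ring
      · rw [h']; ring
    obtain ⟨a, b, hab, hda, hdd⟩ := affine_of_prod_zero hJo hJc hy₀ hg hgz
    refine ⟨a, b, hab, fun x hx => ?_⟩
    have h := heq x hx y₀ hy₀
    rw [hda y₀ hy₀, hdd y₀ hy₀] at h
    rw [show (1 + deriv f x ^ 2 + a ^ 2 : ℝ) = 1 + a ^ 2 + deriv f x ^ 2 by ring] at h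
    linarith
end

section
/- Let Σ be a surface of revolution about an axis L that is a λ-translating soliton with unit density vector v = (v₁, v₂, v₃). Then either v is parallel to L, or Σ is a plane orthogonal to L. Specifically, with L the z-axis and profile curve (x(s), 0, z(s)), the soliton equation reads sin θ/x + θ' = 2λ − v₁ sin θ cos t − v₂ sin θ sin t + v₃ cos θ for all s, t; linear independence of {1, cos t, sin t} forces v₁ sin θ = v₂ sin θ ≡ 0, so either v₁ = v₂ = 0 or sin θ ≡ 0 (a horizontal plane). -/
/-- A rotational surface about the `z`-axis, with unit-speed profile curve
`(x(s), 0, z(s))`, `x > 0`, which is a `λ`-translating soliton with unit density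
vector `v = (v₁, v₂, v₃)` satisfies
`sin θ/x + θ' = 2λ - v₁ sin θ cos t - v₂ sin θ sin t + v₃ cos θ` for all `s, t`.
Then `v₁ sin θ ≡ v₂ sin θ ≡ 0`, so either `v₁ = v₂ = 0` (the density vector is
parallel to the axis) or `sin θ ≡ 0` (the surface is a plane orthogonal to the
axis). -/
theorem stmt14 (lam v₁ v₂ v₃ : ℝ) (hv : v₁^2 + v₂^2 + v₃^2 = 1)
    (S : Set ℝ) (hSne : S.Nonempty)
    (x z θ θd : ℝ → ℝ)
    (hxpos : ∀ s ∈ S, 0 < x s)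
    (hx : ∀ s ∈ S, HasDerivAt x (Real.cos (θ s)) s)
    (hz : ∀ s ∈ S, HasDerivAt z (Real.sin (θ s)) s)
    (hθ : ∀ s ∈ S, HasDerivAt θ (θd s) s)
    (heq : ∀ s ∈ S, ∀ t : ℝ,
      Real.sin (θ s) / x s + θd s
        = 2*lam - v₁ * Real.sin (θ s) * Real.cos t - v₂ * Real.sin (θ s) * Real.sin t
          + v₃ * Real.cos (θ s)) :
    (∀ s ∈ S, v₁ * Real.sin (θ s) = 0 ∧ v₂ * Real.sin (θ s) = 0) ∧
    ((v₁ = 0 ∧ v₂ = 0) ∨ (∀ s ∈ S, Real.sin (θ s) = 0)) := by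
  have key : ∀ s ∈ S, v₁ * Real.sin (θ s) = 0 ∧ v₂ * Real.sin (θ s) = 0 := by
    intro s hs
    have h0 := heq s hs 0
    have hpi := heq s hs Real.pi
    have hhalf := heq s hs (Real.pi/2)
    have h3 := heq s hs (-(Real.pi/2))
    simp [Real.cos_pi, Real.sin_pi, Real.cos_pi_div_two, Real.sin_pi_div_two] at h0 hpi hhalf h3
    constructor
    · nlinarith [h0, hpi]
    · nlinarith [hhalf, h3]
  refine ⟨key, ?_⟩
  by_cases h : ∀ s ∈ S, Real.sin (θ s) = 0
  · exact Or.inr h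
  · push_neg at h
    obtain ⟨s, hs, hne⟩ := h
    obtain ⟨h1, h2⟩ := key s hs
    exact Or.inl ⟨(mul_eq_zero.mp h1).resolve_right hne, (mul_eq_zero.mp h2).resolve_right hne⟩
end

section
/- Let (x, z, θ) solve x' = cos θ, z' = sin θ, θ' = 2λ + cos θ − sin θ/x on an interval with x > 0. Then for all s, s₀ in the interval: x(s) sin θ(s) − λ x(s)² = x(s₀) sin θ(s₀) − λ x(s₀)² + ∫_{s₀}^{s} x(t) x'(t)² dt. -/
/-! Along a solution, `x sin θ - λ x²` has derivative `x cos² θ`: differentiating `x sin θ`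
produces `x cos θ · θ' = 2λ x cos θ + x cos² θ - sin θ cos θ`, whose last term cancels
`x' sin θ` and whose first is `(λ x²)'`. The identity is then the fundamental theorem of
calculus on the interval between `s₀` and `s`. -/

open Real

theorem Set.OrdConnected.integral_eq_sub_of_hasDerivAt {E : Type*} [NormedAddCommGroup E]
    [NormedSpace ℝ E] [CompleteSpace E] {S : Set ℝ} (hS : S.OrdConnected) {f f' : ℝ → E}
    (hderiv : ∀ t ∈ S, HasDerivAt f (f' t) t) (hcont : ContinuousOn f' S)
    {a b : ℝ} (ha : a ∈ S) (hb : b ∈ S) :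
    ∫ t in a..b, f' t = f b - f a :=
  have hsub : Set.uIcc a b ⊆ S := hS.uIcc_subset ha hb
  intervalIntegral.integral_eq_sub_of_hasDerivAt (fun t ht => hderiv t (hsub ht))
    (hcont.mono hsub).intervalIntegrable

theorem hasDerivAt_mul_sin_sub_mul_sq {lam t : ℝ} {x θ : ℝ → ℝ} (hxt : x t ≠ 0)
    (hx : HasDerivAt x (cos (θ t)) t)
    (hθ : HasDerivAt θ (2 * lam + cos (θ t) - sin (θ t) / x t) t) :
    HasDerivAt (fun u => x u * sin (θ u) - lam * x u ^ 2) (x t * cos (θ t) ^ 2) t := by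
  have h : HasDerivAt (fun u => x u * sin (θ u) - lam * x u ^ 2) _ t :=
    (hx.mul ((hasDerivAt_sin (θ t)).comp t hθ)).sub ((hx.pow 2).const_mul lam)
  refine h.congr_deriv ?_
  simp only [Function.comp_apply]
  field_simp
  ring

theorem stmt16_general (lam : ℝ) (S : Set ℝ) (hconv : Convex ℝ S)
    (x θ : ℝ → ℝ)
    (hxpos : ∀ s ∈ S, 0 < x s)
    (hx : ∀ s ∈ S, HasDerivAt x (Real.cos (θ s)) s)
    (hθ : ∀ s ∈ S, HasDerivAt θ
      (2*lam + Real.cos (θ s) - Real.sin (θ s) / x s) s) :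
    ∀ s ∈ S, ∀ s₀ ∈ S,
      x s * Real.sin (θ s) - lam * (x s)^2
        = x s₀ * Real.sin (θ s₀) - lam * (x s₀)^2
          + ∫ t in s₀..s, x t * (Real.cos (θ t))^2 := by
  intro s hs s₀ hs₀
  have hcont : ContinuousOn (fun t => x t * cos (θ t) ^ 2) S := fun t ht =>
    ((hx t ht).continuousAt.mul
      ((continuous_cos.continuousAt.comp (hθ t ht).continuousAt).pow 2)).continuousWithinAt
  rw [hconv.ordConnected.integral_eq_sub_of_hasDerivAt
    (fun t ht => hasDerivAt_mul_sin_sub_mul_sq (hxpos t ht).ne' (hx t ht) (hθ t ht))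
    hcont hs₀ hs]
  ring

/-- First integral for the profile curve of a rotational `λ`-translating soliton:
if `x' = cos θ`, `z' = sin θ`, `θ' = 2λ + cos θ - sin θ/x` on an open interval with
`x > 0`, then for all `s, s₀` in the interval,
`x(s) sin θ(s) - λ x(s)² = x(s₀) sin θ(s₀) - λ x(s₀)² + ∫_{s₀}^{s} x(t) x'(t)² dt`. -/
theorem stmt16 (lam : ℝ) (S : Set ℝ) (hSo : IsOpen S) (hconv : Convex ℝ S)
    (x z θ : ℝ → ℝ)
    (hxpos : ∀ s ∈ S, 0 < x s)
    (hx : ∀ s ∈ S, HasDerivAt x (Real.cos (θ s)) s)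
    (hz : ∀ s ∈ S, HasDerivAt z (Real.sin (θ s)) s)
    (hθ : ∀ s ∈ S, HasDerivAt θ
      (2*lam + Real.cos (θ s) - Real.sin (θ s) / x s) s) :
    ∀ s ∈ S, ∀ s₀ ∈ S,
      x s * Real.sin (θ s) - lam * (x s)^2
        = x s₀ * Real.sin (θ s₀) - lam * (x s₀)^2
          + ∫ t in s₀..s, x t * (Real.cos (θ t))^2 :=
  stmt16_general lam S hconv x θ hxpos hx hθ
end

section
/- Suppose the profile curve (x(s), z(s)) of a rotational λ-translating soliton, satisfying x' = cos θ, z' = sin θ, θ' = 2λ + cos θ − sin θ/x for s > 0 with x > 0, extends continuously to s = 0 with x(0) = 0 and x'(0) ≠ 0. Then sin θ(0) = 0; i.e., the curve meets the rotation axis perpendicularly. -/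
/-! Since `x(s)/s → d ≠ 0`, the ODE gives `s θ'(s) → -sin θ(0)/d`. If this limit were
nonzero, `θ` would behave like a nonzero multiple of `log s` near `0` and could not be
continuous there. -/

open Filter Set Topology Real

theorem tendsto_atTop_nhdsGT_of_mul_deriv_le_neg {f f' : ℝ → ℝ} {K ε : ℝ} (hK : 0 < K)
    (hε : 0 < ε) (hf : ∀ s ∈ Ioo 0 ε, HasDerivAt f (f' s) s)
    (hf' : ∀ s ∈ Ioo 0 ε, s * f' s ≤ -K) :
    Tendsto f (𝓝[>] 0) atTop := by
  -- `f + K log` is antitone near `0`, and `-K log s → +∞`.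
  set φ : ℝ → ℝ := fun s => f s + K * log s
  have hφ' : ∀ s ∈ Ioo 0 ε, HasDerivAt φ (f' s + K * s⁻¹) s := fun s hs =>
    (hf s hs).add ((hasDerivAt_log hs.1.ne').const_mul K)
  have hφ : AntitoneOn φ (Ioo 0 ε) := by
    refine antitoneOn_of_hasDerivWithinAt_nonpos (f' := fun s => f' s + K * s⁻¹)
      (convex_Ioo 0 ε) (fun s hs => (hφ' s hs).continuousAt.continuousWithinAt) ?_ ?_
    · rw [interior_Ioo]
      exact fun s hs => (hφ' s hs).hasDerivWithinAt
    · rw [interior_Ioo]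
      intro s hs
      calc f' s + K * s⁻¹ = s⁻¹ * (s * f' s + K) := by field_simp [hs.1.ne']
        _ ≤ 0 := mul_nonpos_of_nonneg_of_nonpos (inv_nonneg.2 hs.1.le) (by linarith [hf' s hs])
  have hbound : ∀ s ∈ Ioo 0 (ε / 2), φ (ε / 2) - K * log s ≤ f s := fun s hs => by
    have := hφ ⟨hs.1, by linarith [hs.2]⟩ ⟨half_pos hε, by linarith⟩ hs.2.le
    linarith
  refine tendsto_atTop_mono' _ (eventually_of_mem (Ioo_mem_nhdsGT (half_pos hε)) hbound) ?_
  simp_rw [sub_eq_add_neg, ← neg_mul]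
  exact tendsto_atTop_add_const_left _ _
    (tendsto_log_nhdsGT_zero.const_mul_atBot_of_neg (neg_neg_of_pos hK))

theorem tendsto_atTop_nhdsGT_of_tendsto_mul_deriv_neg {f f' : ℝ → ℝ} {L : ℝ} (hL : L < 0)
    (hf : ∀ᶠ s in 𝓝[>] 0, HasDerivAt f (f' s) s)
    (hlim : Tendsto (fun s => s * f' s) (𝓝[>] 0) (𝓝 L)) :
    Tendsto f (𝓝[>] 0) atTop := by
  have hnear : ∀ᶠ s in 𝓝[>] 0, HasDerivAt f (f' s) s ∧ s * f' s < L / 2 :=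
    hf.and (hlim.eventually (gt_mem_nhds (by linarith)))
  obtain ⟨ε, hε, hsub⟩ := mem_nhdsGT_iff_exists_Ioo_subset.1 hnear
  refine tendsto_atTop_nhdsGT_of_mul_deriv_le_neg (K := -(L / 2)) (by linarith) hε
    (fun s hs => (hsub hs).1) fun s hs => ?_
  rw [neg_neg]
  exact (hsub hs).2.le

theorem not_continuousWithinAt_Ici_of_tendsto_mul_deriv_ne_zero {f f' : ℝ → ℝ} {L : ℝ}
    (hL : L ≠ 0) (hf : ∀ᶠ s in 𝓝[>] 0, HasDerivAt f (f' s) s)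
    (hlim : Tendsto (fun s => s * f' s) (𝓝[>] 0) (𝓝 L)) :
    ¬ContinuousWithinAt f (Ici 0) 0 := by
  intro hc
  have hc' : Tendsto f (𝓝[>] 0) (𝓝 (f 0)) := (hc.mono Ioi_subset_Ici_self).tendsto
  rcases hL.lt_or_gt with hL | hL
  · exact not_tendsto_nhds_of_tendsto_atTop
      (tendsto_atTop_nhdsGT_of_tendsto_mul_deriv_neg hL hf hlim) _ hc'
  · have := tendsto_atTop_nhdsGT_of_tendsto_mul_deriv_neg (f := -f) (f' := -f') (neg_lt_zero.2 hL)
      (hf.mono fun s hs => hs.neg) (by simpa using hlim.neg)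
    exact not_tendsto_nhds_of_tendsto_atTop this _ hc'.neg

theorem HasDerivWithinAt.tendsto_div_self_nhdsGT {x : ℝ → ℝ} {d : ℝ} (hx0 : x 0 = 0)
    (h : HasDerivWithinAt x d (Ici 0) 0) :
    Tendsto (fun s => x s / s) (𝓝[>] 0) (𝓝 d) := by
  refine ((hasDerivWithinAt_iff_tendsto_slope' (lt_irrefl 0)).1 h.Ioi_of_Ici).congr fun s => ?_
  simp [slope_def_field, hx0]

theorem stmt17_general (lam : ℝ) (x θ : ℝ → ℝ) (d : ℝ)
    (hθ : ∀ s : ℝ, 0 < s → HasDerivAt θ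
      (2*lam + Real.cos (θ s) - Real.sin (θ s) / x s) s)
    (hx0 : x 0 = 0)
    (hθc : ContinuousWithinAt θ (Set.Ici 0) 0)
    (hx'0 : HasDerivWithinAt x d (Set.Ici 0) 0) (hd : d ≠ 0) :
    Real.sin (θ 0) = 0 := by
  have hθ0 : Tendsto θ (𝓝[>] 0) (𝓝 (θ 0)) := (hθc.mono Ioi_subset_Ici_self).tendsto
  have hid : Tendsto (fun s : ℝ => s) (𝓝[>] 0) (𝓝 0) := nhdsWithin_le_nhds
  have hcos : Tendsto (fun s => cos (θ s)) (𝓝[>] 0) (𝓝 (cos (θ 0))) :=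
    (continuous_cos.tendsto _).comp hθ0
  have hsin : Tendsto (fun s => sin (θ s)) (𝓝[>] 0) (𝓝 (sin (θ 0))) :=
    (continuous_sin.tendsto _).comp hθ0
  have hlim : Tendsto (fun s => s * (2*lam + cos (θ s) - sin (θ s) / x s)) (𝓝[>] 0)
      (𝓝 (0 * (2*lam + cos (θ 0)) - sin (θ 0) * d⁻¹)) := by
    refine ((hid.mul (tendsto_const_nhds.add hcos)).sub
      (hsin.mul ((hx'0.tendsto_div_self_nhdsGT hx0).inv₀ hd))).congr fun s => ?_
    rw [inv_div]
    ring
  by_contra hsin0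
  refine not_continuousWithinAt_Ici_of_tendsto_mul_deriv_ne_zero ?_
    (eventually_mem_nhdsWithin.mono hθ) hlim hθc
  simpa [hd] using hsin0

/-- If the profile curve of a rotational `λ`-translating soliton reaches the rotation
axis (`x 0 = 0`, `x > 0` for `s > 0`, the ODE holding for `s > 0`), extends
continuously to `s = 0` and has nonvanishing one-sided derivative `x'(0) ≠ 0` there,
then `sin θ(0) = 0`: the curve meets the axis perpendicularly. -/
theorem stmt17 (lam : ℝ) (x z θ : ℝ → ℝ) (d : ℝ)
    (hxpos : ∀ s : ℝ, 0 < s → 0 < x s)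
    (hx : ∀ s : ℝ, 0 < s → HasDerivAt x (Real.cos (θ s)) s)
    (hz : ∀ s : ℝ, 0 < s → HasDerivAt z (Real.sin (θ s)) s)
    (hθ : ∀ s : ℝ, 0 < s → HasDerivAt θ
      (2*lam + Real.cos (θ s) - Real.sin (θ s) / x s) s)
    (hx0 : x 0 = 0)
    (hxc : ContinuousWithinAt x (Set.Ici 0) 0)
    (hθc : ContinuousWithinAt θ (Set.Ici 0) 0)
    (hx'0 : HasDerivWithinAt x d (Set.Ici 0) 0) (hd : d ≠ 0) :
    Real.sin (θ 0) = 0 :=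
  stmt17_general lam x θ d hθ hx0 hθc hx'0 hd
end

section
/- Consider the planar autonomous vector field V(θ, x) = (2λx + x cos θ − sin θ, x cos θ) on ℝ² with λ ≠ 0. Its singular points in the strip [−π, π] × [0, ∞) are exactly (0,0), (±π, 0), together with (π/2, 1/(2λ)) if λ > 0 and (−π/2, −1/(2λ)) if λ < 0. At Q = (π/2, 1/(2λ)) (for λ > 0), the eigenvalues of the linearization are (−1 ± √(1 − 16λ²))/(4λ); hence both eigenvalues have negative real part, and they are non-real (Q is a stable spiral point) if and only if λ > 1/4. -/
/-!
On the axis `x = 0` the field vanishes exactly where `sin θ = 0`. Off the axis the second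
component forces `cos θ = 0`, i.e. `θ = ±π/2`, and the first then reads `2λx = ±1`, which has
a solution `x ≥ 0` only for the sign of `λ`.

At `Q` the linearization has trace `-1/(2λ)` and determinant `1`, so its eigenvalues are the
roots of `μ² + bμ + c` with `b = 1/(2λ) > 0`, `c = 1`. Splitting such an equation into real and
imaginary parts, a non-real root has real part `-b/2`, a real root is negative because all
coefficients are positive, and non-real roots exist exactly when `b² < 4c`, i.e. `λ > 1/4`.
-/

open Real Set Polynomial

namespace Real

theorem sin_eq_zero_iff_of_mem_Icc {θ : ℝ} (hθ : θ ∈ Icc (-π) π) :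
    sin θ = 0 ↔ θ = 0 ∨ θ = π ∨ θ = -π := by
  refine ⟨fun h => ?_, by rintro (rfl | rfl | rfl) <;> simp⟩
  rcases hθ.1.eq_or_lt with rfl | h₁
  · simp
  rcases hθ.2.lt_or_eq with h₂ | rfl
  · exact Or.inl ((sin_eq_zero_iff_of_lt_of_lt h₁ h₂).1 h)
  · simp

theorem cos_eq_zero_iff_of_mem_Icc {θ : ℝ} (hθ : θ ∈ Icc (-π) π) :
    cos θ = 0 ↔ θ = π / 2 ∨ θ = -(π / 2) := by
  refine ⟨fun h => ?_, by rintro (rfl | rfl) <;> simp⟩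
  rw [← abs_eq (by positivity)]
  refine injOn_cos ⟨abs_nonneg θ, abs_le.2 hθ⟩ ⟨by positivity, by linarith [pi_pos]⟩ ?_
  rw [cos_abs, h, cos_pi_div_two]

end Real

noncomputable def solitonField (lam : ℝ) (p : ℝ × ℝ) : ℝ × ℝ :=
  (2 * lam * p.2 + p.2 * cos p.1 - sin p.1, p.2 * cos p.1)

section SingularPoints

variable {lam : ℝ}

theorem solitonField_eq_zero_iff {θ x : ℝ} (hθ : θ ∈ Icc (-π) π) :
    solitonField lam (θ, x) = 0 ↔
      x = 0 ∧ (θ = 0 ∨ θ = π ∨ θ = -π) ∨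
        θ = π / 2 ∧ 2 * lam * x = 1 ∨ θ = -(π / 2) ∧ 2 * lam * x = -1 := by
  rw [← Real.sin_eq_zero_iff_of_mem_Icc hθ]
  simp only [solitonField, Prod.mk_eq_zero, mul_eq_zero]
  constructor
  · rintro ⟨h, rfl | hc⟩
    · exact .inl ⟨rfl, by simpa using h⟩
    · rcases (Real.cos_eq_zero_iff_of_mem_Icc hθ).1 hc with rfl | rfl
      · rw [cos_pi_div_two, sin_pi_div_two] at h
        exact .inr <| .inl ⟨rfl, by linarith⟩
      · rw [cos_neg, sin_neg, cos_pi_div_two, sin_pi_div_two] at h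
        exact .inr <| .inr ⟨rfl, by linarith⟩
  · rintro (⟨rfl, hs⟩ | ⟨rfl, h⟩ | ⟨rfl, h⟩) <;> simp [*]

theorem solitonField_singular_of_pos (hlam : 0 < lam) :
    {p ∈ Icc (-π) π ×ˢ Ici (0:ℝ) | solitonField lam p = 0} =
      {(0, 0), (π, 0), (-π, 0), (π / 2, 1 / (2 * lam))} := by
  have := pi_pos
  ext ⟨θ, x⟩
  simp only [mem_ofPred_eq, mem_prod, mem_Icc, mem_Ici, mem_insert_iff, mem_singleton_iff,
    Prod.mk.injEq]
  constructor
  · rintro ⟨⟨hθ, hx⟩, h⟩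
    rcases (solitonField_eq_zero_iff hθ).1 h with ⟨rfl, rfl | rfl | rfl⟩ | ⟨rfl, hQ⟩ | ⟨rfl, hQ⟩
    · simp
    · simp
    · simp
    · exact .inr <| .inr <| .inr ⟨rfl, by rw [eq_div_iff (by positivity)]; linarith⟩
    · nlinarith
  · rintro (⟨rfl, rfl⟩ | ⟨rfl, rfl⟩ | ⟨rfl, rfl⟩ | ⟨rfl, rfl⟩) <;>
      refine ⟨⟨⟨by linarith, by linarith⟩, by positivity⟩,
        (solitonField_eq_zero_iff ⟨by linarith, by linarith⟩).2 ?_⟩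
    all_goals first
      | exact .inr <| .inl ⟨rfl, by field_simp⟩
      | simp

theorem solitonField_singular_of_neg (hlam : lam < 0) :
    {p ∈ Icc (-π) π ×ˢ Ici (0:ℝ) | solitonField lam p = 0} =
      {(0, 0), (π, 0), (-π, 0), (-(π / 2), -1 / (2 * lam))} := by
  have := pi_pos
  ext ⟨θ, x⟩
  simp only [mem_ofPred_eq, mem_prod, mem_Icc, mem_Ici, mem_insert_iff, mem_singleton_iff,
    Prod.mk.injEq]
  constructor
  · rintro ⟨⟨hθ, hx⟩, h⟩
    rcases (solitonField_eq_zero_iff hθ).1 h with ⟨rfl, rfl | rfl | rfl⟩ | ⟨rfl, hQ⟩ | ⟨rfl, hQ⟩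
    · simp
    · simp
    · simp
    · nlinarith
    · exact .inr <| .inr <| .inr ⟨rfl, by rw [eq_div_iff (by linarith)]; linarith⟩
  · rintro (⟨rfl, rfl⟩ | ⟨rfl, rfl⟩ | ⟨rfl, rfl⟩ | ⟨rfl, rfl⟩) <;>
      refine ⟨⟨⟨by linarith, by linarith⟩, ?_⟩,
        (solitonField_eq_zero_iff ⟨by linarith, by linarith⟩).2 ?_⟩
    all_goals first
      | exact .inr <| .inr ⟨rfl, by field_simp [hlam.ne]⟩
      | exact div_nonneg_of_nonpos (by norm_num) (by linarith)
      | simp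

end SingularPoints

section Linearization

variable {K : Type*} [Field K] [NeZero (2 : K)] {lam : K}

theorem charpoly_solitonField_linearization (hlam : lam ≠ 0) :
    (!![-(1 / (2 * lam)), 2 * lam; -(1 / (2 * lam)), 0] : Matrix (Fin 2) (Fin 2) K).charpoly =
      X ^ 2 + C (1 / (2 * lam)) * X + C 1 := by
  rw [Matrix.charpoly_fin_two, Matrix.trace_fin_two, Matrix.det_fin_two]
  simp only [Matrix.of_apply, Matrix.cons_val', Matrix.cons_val_zero, Matrix.cons_val_one,
    Matrix.empty_val', Matrix.cons_val_fin_one]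
  have hdet : -(1 / (2 * lam)) * 0 - 2 * lam * -(1 / (2 * lam)) = 1 := by field_simp; simp
  rw [hdet, add_zero, map_neg]
  ring

theorem solitonField_linearization_eigenvalue_iff {c : K} (hlam : lam ≠ 0) (hc : c ^ 2 = 1 - 16 * lam ^ 2)
    (μ : K) :
    μ ^ 2 + 1 / (2 * lam) * μ + 1 = 0 ↔
      μ = (-1 + c) / (4 * lam) ∨ μ = (-1 - c) / (4 * lam) := by
  have h₄ : (4 : K) = 2 * 2 := by norm_num
  have hdisc : discrim 1 (1 / (2 * lam)) 1 = c / (2 * lam) * (c / (2 * lam)) := by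
    rw [discrim]
    field_simp
    linear_combination -hc
  convert quadratic_eq_zero_iff one_ne_zero hdisc μ using 3
  · ring
  all_goals field_simp [h₄]; ring

end Linearization

namespace Complex

theorem quadratic_eq_zero_iff_re_im {b c : ℝ} {μ : ℂ} :
    μ ^ 2 + b * μ + c = 0 ↔
      μ.re ^ 2 - μ.im ^ 2 + b * μ.re + c = 0 ∧ μ.im * (2 * μ.re + b) = 0 := by
  simp only [Complex.ext_iff, add_re, add_im, mul_re, mul_im, ofReal_re, ofReal_im, pow_two,
    zero_re, zero_im]
  constructor <;> rintro ⟨h₁, h₂⟩ <;> exact ⟨by linear_combination h₁, by linear_combination h₂⟩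

theorem re_neg_of_quadratic_eq_zero {b c : ℝ} (hb : 0 < b) (hc : 0 < c) {μ : ℂ}
    (h : μ ^ 2 + b * μ + c = 0) : μ.re < 0 := by
  obtain ⟨hre, him⟩ := quadratic_eq_zero_iff_re_im.1 h
  rcases mul_eq_zero.1 him with him | him
  · rw [him] at hre
    by_contra! hμ
    nlinarith [mul_nonneg hb.le hμ]
  · linarith

theorem exists_quadratic_eq_zero_im_ne_zero_iff {b c : ℝ} :
    (∃ μ : ℂ, μ ^ 2 + b * μ + c = 0 ∧ μ.im ≠ 0) ↔ b ^ 2 < 4 * c := by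
  constructor
  · rintro ⟨μ, h, hμ⟩
    obtain ⟨hre, him⟩ := quadratic_eq_zero_iff_re_im.1 h
    have hre' : 2 * μ.re + b = 0 := (mul_eq_zero.1 him).resolve_left hμ
    nlinarith [sq_pos_of_ne_zero hμ]
  · intro hbc
    have hd : 0 < c - b ^ 2 / 4 := by linarith
    refine ⟨⟨-b / 2, √(c - b ^ 2 / 4)⟩, quadratic_eq_zero_iff_re_im.2 ⟨?_, ?_⟩, (sqrt_pos.2 hd).ne'⟩
    · rw [sq_sqrt hd.le]; ring
    · ring

end Complex

/-- The phase-plane vector field `V(θ, x) = (2λx + x cos θ - sin θ, x cos θ)` of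
rotational `λ`-translating solitons (`λ ≠ 0`): its singular points in
`[-π, π] × [0, ∞)` are exactly `(0,0)`, `(±π, 0)` together with `(π/2, 1/(2λ))` if
`λ > 0` and `(-π/2, -1/(2λ))` if `λ < 0`.  For `λ > 0`, the linearization at
`Q = (π/2, 1/(2λ))` is `[[-1/(2λ), 2λ], [-1/(2λ), 0]]`, with characteristic
polynomial `μ² + μ/(2λ) + 1`, whose roots are `(-1 ± √(1-16λ²))/(4λ)`; both roots
have negative real part, and they are non-real (stable spiral point) iff `λ > 1/4`. -/
theorem stmt19 (lam : ℝ) (hlam : lam ≠ 0)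
    (V : ℝ × ℝ → ℝ × ℝ)
    (hV : ∀ p : ℝ × ℝ,
      V p = (2*lam*p.2 + p.2 * Real.cos p.1 - Real.sin p.1, p.2 * Real.cos p.1)) :
    ({p ∈ Set.Icc (-Real.pi) Real.pi ×ˢ Set.Ici (0:ℝ) | V p = 0}
      = if 0 < lam then
          {((0:ℝ),(0:ℝ)), (Real.pi, 0), (-Real.pi, 0), (Real.pi/2, 1/(2*lam))}
        else
          {((0:ℝ),(0:ℝ)), (Real.pi, 0), (-Real.pi, 0), (-(Real.pi/2), -1/(2*lam))}) ∧
    (0 < lam →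
      (Matrix.charpoly
          (!![-(1/(2*(lam:ℂ))), 2*(lam:ℂ); -(1/(2*(lam:ℂ))), 0] :
            Matrix (Fin 2) (Fin 2) ℂ)
        = X^2 + C (1/(2*(lam:ℂ))) * X + C 1) ∧
      (∃ c : ℂ, c^2 = 1 - 16*(lam:ℂ)^2 ∧
        ∀ μ : ℂ, μ^2 + (1/(2*(lam:ℂ)))*μ + 1 = 0 ↔
          (μ = (-1 + c)/(4*(lam:ℂ)) ∨ μ = (-1 - c)/(4*(lam:ℂ)))) ∧
      (∀ μ : ℂ, μ^2 + (1/(2*(lam:ℂ)))*μ + 1 = 0 → μ.re < 0) ∧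
      ((∃ μ : ℂ, μ^2 + (1/(2*(lam:ℂ)))*μ + 1 = 0 ∧ μ.im ≠ 0) ↔ 1/4 < lam)) := by
  obtain rfl : V = solitonField lam := funext hV
  refine ⟨?_, fun hpos => ?_⟩
  · split_ifs with hpos
    · exact solitonField_singular_of_pos hpos
    · exact solitonField_singular_of_neg (lt_of_le_of_ne (not_lt.1 hpos) hlam)
  have hlamC : (lam : ℂ) ≠ 0 := Complex.ofReal_ne_zero.2 hpos.ne'
  have hreal (μ : ℂ) :
      μ ^ 2 + 1 / (2 * (lam : ℂ)) * μ + 1 = μ ^ 2 + ((1 / (2 * lam) : ℝ) : ℂ) * μ + (1 : ℝ) := by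
    push_cast; ring
  obtain ⟨c, hc⟩ := IsAlgClosed.exists_pow_nat_eq (1 - 16 * (lam : ℂ) ^ 2) two_pos
  refine ⟨charpoly_solitonField_linearization hlamC, ⟨c, hc, solitonField_linearization_eigenvalue_iff hlamC hc⟩,
    fun μ hμ => Complex.re_neg_of_quadratic_eq_zero (by positivity) one_pos (hreal μ ▸ hμ), ?_⟩
  simp only [hreal, Complex.exists_quadratic_eq_zero_im_ne_zero_iff]
  rw [div_pow, div_lt_iff₀ (by positivity)]
  constructor <;> intro h <;> nlinarith
end
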